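/- For all integers n ≥ 0 and m ≥ 0, the coefficient of z^n in the formal power series (Σ_{j≥0} binom(j+m, j)·z^j)·(Σ_{k≥1} z^k/k)² equals binom(n+m, n)·((H_{n+m} − H_m)² − (H_{n+m}^{(2)} − H_m^{(2)})). Equivalently, [z^n] (1−z)^{−(m+1)}·log²(1/(1−z)) = binom(n+m, n)·((H_{n+m} − H_m)² − (H_{n+m}^{(2)} − H_m^{(2)})). -/

import Mathlib

/-- The `r`-th harmonic number `H_r = Σ_{k=1}^r 1/k` (`H_0 = 0`). -/
noncomputable def harmonicNum (r : ℕ) : ℝ := ∑ k ∈ Finset.Icc 1 r, (1 : ℝ) / k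

/-- The `r`-th second-order harmonic number `H_r^{(2)} = Σ_{k=1}^r 1/k²` (`H_0^{(2)} = 0`). -/
noncomputable def harmonicNum2 (r : ℕ) : ℝ := ∑ k ∈ Finset.Icc 1 r, (1 : ℝ) / (k : ℝ) ^ 2

/-- The formal power series `(1−z)^{−(m+1)} = Σ_{j≥0} binom(j+m,j)·z^j`. -/
noncomputable def invOneSubPow' (m : ℕ) : PowerSeries ℝ :=
  PowerSeries.mk fun j => ((j + m).choose j : ℝ)

/-- The formal power series `log(1/(1−z)) = Σ_{k≥1} z^k/k`. -/
noncomputable def logInvOneSub : PowerSeries ℝ :=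
  PowerSeries.mk fun k => if k = 0 then 0 else (1 : ℝ) / k

open PowerSeries Finset

lemma harmonicNum_zero : harmonicNum 0 = 0 := by simp [harmonicNum]

lemma harmonicNum2_zero : harmonicNum2 0 = 0 := by simp [harmonicNum2]

lemma harmonicNum_succ (r : ℕ) : harmonicNum (r + 1) = harmonicNum r + 1 / ((r : ℝ) + 1) := by
  rw [harmonicNum, harmonicNum, Finset.sum_Icc_succ_top (by omega)]
  push_cast
  ring

lemma harmonicNum2_succ (r : ℕ) :
    harmonicNum2 (r + 1) = harmonicNum2 r + 1 / ((r : ℝ) + 1) ^ 2 := by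
  rw [harmonicNum2, harmonicNum2, Finset.sum_Icc_succ_top (by omega)]
  push_cast
  ring

lemma one_sub_X_mul_invOneSubPow' (m : ℕ) :
    (1 - PowerSeries.X) * invOneSubPow' (m + 1) = invOneSubPow' m := by
  ext k
  rw [sub_mul, one_mul, map_sub]
  cases k with
  | zero => simp [invOneSubPow']
  | succ k =>
      rw [PowerSeries.coeff_succ_X_mul]
      simp only [invOneSubPow', PowerSeries.coeff_mk]
      have e1 : k + 1 + (m + 1) = (k + m + 1) + 1 := by omega
      have e2 : k + (m + 1) = k + m + 1 := by omega
      have e3 : k + 1 + m = k + m + 1 := by omega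
      rw [e1, e2, e3, Nat.choose_succ_succ]
      push_cast
      ring

lemma one_sub_X_mul_inv0 : (1 - PowerSeries.X) * invOneSubPow' 0 = 1 := by
  ext k
  rw [sub_mul, one_mul, map_sub]
  cases k with
  | zero => simp [invOneSubPow']
  | succ k =>
      rw [PowerSeries.coeff_succ_X_mul]
      simp [invOneSubPow', PowerSeries.coeff_one]

lemma coeff_zero_prod (m : ℕ) :
    PowerSeries.coeff 0 (invOneSubPow' m * logInvOneSub ^ 2) = 0 := by
  rw [PowerSeries.coeff_zero_eq_constantCoeff_apply, map_mul, map_pow]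
  have : PowerSeries.constantCoeff logInvOneSub = 0 := by
    rw [← PowerSeries.coeff_zero_eq_constantCoeff_apply]
    simp [logInvOneSub]
  rw [this]
  ring

/-- reflection: sum of 1/(n+1-i) over Icc 1 n equals H_n -/
lemma sum_reflect (n : ℕ) :
    ∑ i ∈ Finset.Icc 1 n, (1 : ℝ) / ((n + 1 - i : ℕ) : ℝ) = harmonicNum n := by
  rw [harmonicNum]
  refine Finset.sum_nbij' (fun i => n + 1 - i) (fun i => n + 1 - i) ?_ ?_ ?_ ?_ ?_
  · intro a ha; simp only [Finset.mem_Icc] at *; omega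
  · intro a ha; simp only [Finset.mem_Icc] at *; omega
  · intro a ha; simp only [Finset.mem_Icc] at *; omega
  · intro a ha; simp only [Finset.mem_Icc] at *; omega
  · intro a ha
    rfl

lemma coeff_log_sq (n : ℕ) :
    PowerSeries.coeff (n + 1) (logInvOneSub ^ 2) = 2 * harmonicNum n / ((n : ℝ) + 1) := by
  rw [sq, PowerSeries.coeff_mul, Finset.Nat.sum_antidiagonal_eq_sum_range_succ_mk]
  simp only [logInvOneSub, PowerSeries.coeff_mk]
  have hsub : ∑ i ∈ Finset.range (n + 2),
      (if i = 0 then (0:ℝ) else 1 / i) * (if n + 1 - i = 0 then (0:ℝ) else 1 / ((n + 1 - i : ℕ) : ℝ))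
      = ∑ i ∈ Finset.Icc 1 n,
      (1 / (i:ℝ)) * (1 / ((n + 1 - i : ℕ) : ℝ)) := by
    rw [← Finset.sum_subset (s₁ := Finset.Icc 1 n) (by intro x hx; simp only [Finset.mem_Icc, Finset.mem_range] at *; omega)]
    · apply Finset.sum_congr rfl
      intro i hi
      simp only [Finset.mem_Icc] at hi
      rw [if_neg (by omega), if_neg (by omega)]
    · intro x hx hx2
      simp only [Finset.mem_Icc, Finset.mem_range] at *
      have : x = 0 ∨ x = n + 1 := by omega
      rcases this with h | h <;> subst h <;> simp
  rw [hsub]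
  have key : ∀ i ∈ Finset.Icc 1 n,
      (1 / (i:ℝ)) * (1 / ((n + 1 - i : ℕ) : ℝ))
        = (1 / ((n:ℝ) + 1)) * (1 / (i:ℝ) + 1 / ((n + 1 - i : ℕ) : ℝ)) := by
    intro i hi
    simp only [Finset.mem_Icc] at hi
    have h1 : (0:ℝ) < i := by exact_mod_cast hi.1
    have h2 : (0:ℝ) < ((n + 1 - i : ℕ) : ℝ) := by
      have : 0 < n + 1 - i := by omega
      exact_mod_cast this
    have h3 : ((n + 1 - i : ℕ) : ℝ) = (n : ℝ) + 1 - i := by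
      have : (n + 1 - i : ℕ) = n + 1 - i := rfl
      push_cast [Nat.cast_sub (by omega : i ≤ n + 1)]
      ring
    field_simp
    rw [h3]
    ring
  rw [Finset.sum_congr rfl key, ← Finset.mul_sum, Finset.sum_add_distrib, sum_reflect]
  rw [show ∑ i ∈ Finset.Icc 1 n, (1:ℝ)/(i:ℝ) = harmonicNum n from rfl]
  ring

lemma step0 (n : ℕ) :
    PowerSeries.coeff (n + 1) (invOneSubPow' 0 * logInvOneSub ^ 2)
      = PowerSeries.coeff n (invOneSubPow' 0 * logInvOneSub ^ 2)
        + PowerSeries.coeff (n + 1) (logInvOneSub ^ 2) := by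
  have h := one_sub_X_mul_inv0
  have key : invOneSubPow' 0 * logInvOneSub ^ 2
      = logInvOneSub ^ 2 + PowerSeries.X * (invOneSubPow' 0 * logInvOneSub ^ 2) := by
    linear_combination logInvOneSub ^ 2 * h
  calc PowerSeries.coeff (n + 1) (invOneSubPow' 0 * logInvOneSub ^ 2)
      = PowerSeries.coeff (n + 1) (logInvOneSub ^ 2 + PowerSeries.X * (invOneSubPow' 0 * logInvOneSub ^ 2)) := by rw [← key]
    _ = _ := by rw [map_add, PowerSeries.coeff_succ_X_mul]; ring

lemma stepm (n m : ℕ) :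
    PowerSeries.coeff (n + 1) (invOneSubPow' (m + 1) * logInvOneSub ^ 2)
      = PowerSeries.coeff (n + 1) (invOneSubPow' m * logInvOneSub ^ 2)
        + PowerSeries.coeff n (invOneSubPow' (m + 1) * logInvOneSub ^ 2) := by
  have h := one_sub_X_mul_invOneSubPow' m
  have key : invOneSubPow' (m + 1) * logInvOneSub ^ 2
      = invOneSubPow' m * logInvOneSub ^ 2
        + PowerSeries.X * (invOneSubPow' (m + 1) * logInvOneSub ^ 2) := by
    linear_combination logInvOneSub ^ 2 * h
  calc PowerSeries.coeff (n + 1) (invOneSubPow' (m + 1) * logInvOneSub ^ 2)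
      = PowerSeries.coeff (n + 1) (invOneSubPow' m * logInvOneSub ^ 2
        + PowerSeries.X * (invOneSubPow' (m + 1) * logInvOneSub ^ 2)) := by rw [← key]
    _ = _ := by rw [map_add, PowerSeries.coeff_succ_X_mul]

/-- For all `n, m ≥ 0`, `[z^n] (1−z)^{−(m+1)}·log²(1/(1−z))
  = binom(n+m,n)·((H_{n+m} − H_m)² − (H_{n+m}^{(2)} − H_m^{(2)}))`. -/
theorem coeff_invOneSubPow_mul_log_sq (n m : ℕ) :
    PowerSeries.coeff n (invOneSubPow' m * logInvOneSub ^ 2)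
      = ((n + m).choose n : ℝ) * ((harmonicNum (n + m) - harmonicNum m) ^ 2
          - (harmonicNum2 (n + m) - harmonicNum2 m)) := by
  induction m generalizing n with
  | zero =>
      induction n with
      | zero => simp [coeff_zero_prod, harmonicNum_zero, harmonicNum2_zero]
      | succ n ihn =>
          rw [step0, ihn, coeff_log_sq]
          simp only [Nat.add_zero, Nat.choose_self, Nat.cast_one, harmonicNum_zero,
            harmonicNum2_zero, harmonicNum_succ, harmonicNum2_succ]
          have h1 : ((n:ℝ) + 1) ≠ 0 := by positivity
          field_simp
          ring
  | succ m ihm =>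
      induction n with
      | zero =>
          rw [coeff_zero_prod]
          simp
      | succ n ihn =>
          rw [stepm, ihm, ihn]
          -- index normalization
          have e1 : n + 1 + (m + 1) = (n + m + 1) + 1 := by omega
          have e2 : n + 1 + m = n + m + 1 := by omega
          have e3 : n + (m + 1) = n + m + 1 := by omega
          rw [e1, e2, e3, harmonicNum_succ (n + m + 1), harmonicNum2_succ (n + m + 1),
            harmonicNum_succ m, harmonicNum2_succ m]
          -- binomial facts
          have hbc : (((n + m + 1) + 1).choose (n + 1) : ℝ)
              = ((n + m + 1).choose n : ℝ) + ((n + m + 1).choose (n + 1) : ℝ) := by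
            rw [Nat.choose_succ_succ]
            push_cast
            ring
          have hnat : (m + 1) * ((n + m + 1) + 1).choose (n + 1)
              = ((n + m + 1) + 1) * (n + m + 1).choose (n + 1) := by
            have h := Nat.add_one_mul_choose_eq (n + m + 1) m
            have h2 : (n + m + 1).choose m = (n + m + 1).choose (n + 1) := by
              have := Nat.choose_symm_add (a := m) (b := n + 1)
              rwa [show m + (n + 1) = n + m + 1 from by omega] at this
            have h3 : (n + m + 1 + 1).choose (m + 1) = (n + m + 1 + 1).choose (n + 1) := by
              have := Nat.choose_symm_add (a := m + 1) (b := n + 1)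
              rwa [show m + 1 + (n + 1) = n + m + 1 + 1 from by omega] at this
            rw [h2] at h
            rw [h, h3]
            exact Nat.mul_comm _ _
          have hx : (((n + m + 1) + 1).choose (n + 1) : ℝ) * (1 / ((n:ℝ) + (m:ℝ) + 2))
              = ((n + m + 1).choose (n + 1) : ℝ) * (1 / ((m:ℝ) + 1)) := by
            have := congrArg (fun t : ℕ => (t : ℝ)) hnat
            push_cast at this
            have hm1 : ((m:ℝ) + 1) ≠ 0 := by positivity
            have hnm : ((n:ℝ) + (m:ℝ) + 2) ≠ 0 := by positivity
            field_simp
            nlinarith [this]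
          have hcast : ((n + m + 1 : ℕ) : ℝ) + 1 = (n:ℝ) + (m:ℝ) + 2 := by push_cast; ring
          rw [hcast]
          rw [show (1:ℝ)/((m:ℝ)+1)^2 = (1/((m:ℝ)+1))^2 from by rw [div_pow, one_pow],
              show (1:ℝ)/((n:ℝ)+(m:ℝ)+2)^2 = (1/((n:ℝ)+(m:ℝ)+2))^2 from by rw [div_pow, one_pow]]
          linear_combination
            ((harmonicNum2 (n + m + 1) - harmonicNum2 m - (1 / ((m:ℝ) + 1)) ^ 2)
              - (harmonicNum (n + m + 1) - harmonicNum m - 1 / ((m:ℝ) + 1)) ^ 2) * hbc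
            - 2 * (harmonicNum (n + m + 1) - harmonicNum m - 1 / ((m:ℝ) + 1)) * hx
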